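/- arXiv:0712.2738 — 5 statements merged into one kernel-verified Lean document; each statement's English description precedes it below -/
import Mathlib

section
/- Let μ be a probability measure on the unit circle with orthonormal Szegő polynomials (φ_n), and let {p_n} be a generating sequence with s_n = p_n − p_{n−1}. Define ψ_n(z) = z^{−p_n}·φ_n(z) if s_n = 0 and ψ_n(z) = z^{−p_n}·φ*_n(z) if s_n = 1. Then (ψ_n) is orthonormal: ⟨ψ_n, ψ_m⟩ = δ_{nm} with respect to the inner product induced by μ. -/
open Polynomial MeasureTheory

/-- The dual (reversed) polynomial of `p` regarded as a polynomial of degree `n`: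
`p*(z) = Σ_{k=0}^{n} conj(c_{n-k}) z^k` where `p = Σ c_k z^k`. -/
noncomputable def dualPoly (n : ℕ) (p : Polynomial ℂ) : Polynomial ℂ :=
  ∑ k ∈ Finset.range (n + 1), Polynomial.C (starRingEnd ℂ (p.coeff (n - k))) * Polynomial.X ^ k

/-!
On the unit circle `conj z = z⁻¹`, so multiplying by `z ^ (-p)` preserves the inner product and
`φ*_n(z) = z ^ n * conj (φ_n z)` has the same norm as `φ_n`. The function `ψ_n` lies in the span
of `z ^ j` for `-p_n ≤ j ≤ n - p_n`, and it is orthogonal to `z ^ j` for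
`-p_{n-1} ≤ j < n - p_{n-1}`: if `s_n = 0` this is `⟨φ_n, z ^ k⟩ = 0` for `0 ≤ k < n`, and if
`s_n = 1` the identity `conj (φ*_n z) = z ^ (-n) * φ_n z` turns it into `⟨z ^ k, φ_n⟩ = 0`.
Both `p_n` and `n - p_n` are nondecreasing, so for `m < n` the span of `ψ_m` lies in the window
orthogonal to `ψ_n`.
-/

open Metric Finset ComplexConjugate

noncomputable def circleInner (μ : Measure ℝ) (f g : ℂ → ℂ) : ℂ :=
  ∫ θ : ℝ, conj (f (Complex.exp (θ * Complex.I))) * g (Complex.exp (θ * Complex.I)) ∂μ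

lemma conj_zpow_of_norm_eq_one {w : ℂ} (hw : ‖w‖ = 1) (a : ℤ) : conj (w ^ a) = w ^ (-a) := by
  rw [map_zpow₀, ← Complex.inv_eq_conj hw, inv_zpow']

lemma conj_mul_mul_mul_of_norm_eq_one {u : ℂ} (hu : ‖u‖ = 1) (x y : ℂ) :
    conj (u * x) * (u * y) = conj x * y := by
  have h : conj u * u = 1 := by rw [Complex.conj_mul', hu]; norm_num
  rw [map_mul]
  linear_combination (conj x * y) * h

lemma dualPoly_natDegree_le (n : ℕ) (q : ℂ[X]) : (dualPoly n q).natDegree ≤ n :=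
  natDegree_sum_le_of_forall_le _ _ fun k hk =>
    (natDegree_C_mul_le _ _).trans <| by
      rw [natDegree_X_pow]; exact Nat.lt_succ_iff.mp (mem_range.mp hk)

lemma dualPoly_eval_of_norm_eq_one {q : ℂ[X]} {N : ℕ} (hq : q.natDegree ≤ N) {w : ℂ}
    (hw : ‖w‖ = 1) : (dualPoly N q).eval w = w ^ N * conj (q.eval w) := by
  have hw0 : w ≠ 0 := ne_zero_of_norm_ne_zero (hw ▸ one_ne_zero)
  rw [eval_eq_sum_range' (Nat.lt_succ_of_le hq), map_sum, mul_sum, dualPoly, eval_finsetSum,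
    ← sum_range_reflect]
  refine sum_congr rfl fun k hk => ?_
  have hkN : k ≤ N := Nat.lt_succ_iff.mp (mem_range.mp hk)
  rw [Nat.add_sub_cancel, map_mul, map_pow, ← Complex.inv_eq_conj hw, eval_mul, eval_C,
    eval_pow, eval_X, Nat.sub_sub_self hkN, inv_pow, pow_sub₀ _ hw0 hkN]
  ring

section CircleInner

variable (μ : Measure ℝ) {f g : ℂ → ℂ}

lemma circleInner_congr {f' g' : ℂ → ℂ}
    (h : ∀ w : ℂ, ‖w‖ = 1 → conj (f w) * g w = conj (f' w) * g' w) :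
    circleInner μ f g = circleInner μ f' g' :=
  integral_congr_ae (ae_of_all _ fun θ => h _ (Complex.norm_exp_ofReal_mul_I θ))

lemma conj_circleInner : conj (circleInner μ f g) = circleInner μ g f := by
  rw [circleInner, ← integral_conj]
  refine integral_congr_ae (ae_of_all _ fun θ => ?_)
  simp only [map_mul, Complex.conj_conj]
  ring

lemma integrable_circleInner_integrand [IsFiniteMeasure μ] (hf : ContinuousOn f (sphere 0 1))
    (hg : ContinuousOn g (sphere 0 1)) :
    Integrable (fun θ : ℝ =>
      conj (f (Complex.exp (θ * Complex.I))) * g (Complex.exp (θ * Complex.I))) μ := by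
  have hF : ContinuousOn (fun w => conj (f w) * g w) (sphere 0 1) :=
    (Complex.continuous_conj.comp_continuousOn hf).mul hg
  have hexp (θ : ℝ) : Complex.exp (θ * Complex.I) ∈ sphere (0 : ℂ) 1 := by simp
  obtain ⟨C, hC⟩ := (isCompact_sphere (0 : ℂ) 1).exists_bound_of_continuousOn hF
  exact .of_bound (hF.comp_continuous (by fun_prop) hexp).aestronglyMeasurable C
    (ae_of_all _ fun θ => hC _ (hexp θ))

lemma continuousOn_zpow_sphere (a : ℤ) : ContinuousOn (· ^ a : ℂ → ℂ) (sphere 0 1) :=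
  continuousOn_id.zpow₀ a fun _ hw => Or.inl (by rintro rfl; simp at hw)

lemma continuousOn_zpow_mul_eval (a : ℤ) (Q : ℂ[X]) :
    ContinuousOn (fun z : ℂ => z ^ a * Q.eval z) (sphere 0 1) :=
  (continuousOn_zpow_sphere a).mul Q.continuous.continuousOn

lemma circleInner_zpow_mul_eval [IsFiniteMeasure μ] (hf : ContinuousOn f (sphere 0 1)) (a : ℤ)
    {Q : ℂ[X]} {N : ℕ} (hQ : Q.natDegree ≤ N) :
    circleInner μ f (fun z => z ^ a * Q.eval z) =
      ∑ k ∈ range (N + 1), Q.coeff k * circleInner μ f (· ^ (a + k)) := by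
  calc circleInner μ f (fun z => z ^ a * Q.eval z)
      = circleInner μ f (fun z => ∑ k ∈ range (N + 1), Q.coeff k * z ^ (a + k)) := by
        refine circleInner_congr μ fun w hw => ?_
        have hw0 : w ≠ 0 := ne_zero_of_norm_ne_zero (hw ▸ one_ne_zero)
        rw [eval_eq_sum_range' (Nat.lt_succ_of_le hQ), mul_sum]
        congr 1
        refine sum_congr rfl fun k _ => ?_
        rw [zpow_add₀ hw0, zpow_natCast]
        ring
    _ = _ := by
        simp only [circleInner, mul_sum, mul_left_comm _ (Q.coeff _)]
        rw [integral_finsetSum _ fun (k : ℕ) _ =>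
          (integrable_circleInner_integrand μ hf (continuousOn_zpow_sphere (a + k))).const_mul
            (Q.coeff k)]
        simp only [integral_const_mul]

lemma circleInner_eval_zpow_eq_zero [IsFiniteMeasure μ] {φ : ℕ → ℂ[X]}
    (hdeg : ∀ n, (φ n).natDegree ≤ n) (hcoeff : ∀ n, (φ n).coeff n ≠ 0)
    (horth : ∀ n k, k < n → circleInner μ (φ n).eval (φ k).eval = 0)
    {n : ℕ} {j : ℤ} (hj0 : 0 ≤ j) (hjn : j < n) :
    circleInner μ (φ n).eval (· ^ j) = 0 := by
  lift j to ℕ using hj0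
  induction j using Nat.strong_induction_on with
  | _ k ih =>
    have h := horth n k (by exact_mod_cast hjn)
    rw [show (φ k).eval = fun z => z ^ (0 : ℤ) * (φ k).eval z by simp,
      circleInner_zpow_mul_eval μ (φ n).continuous.continuousOn 0 (hdeg k), sum_range_succ,
      sum_eq_zero fun i hi => by
        rw [zero_add, ih i (mem_range.1 hi) (by have := mem_range.1 hi; omega), mul_zero]] at h
    simpa [hcoeff k] using h

lemma circleInner_zpow_mul_eval_zpow_eq_zero {P : ℂ[X]} {n : ℕ}
    (hP : ∀ j : ℤ, 0 ≤ j → j < n → circleInner μ P.eval (· ^ j) = 0) {a j : ℤ}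
    (h0 : 0 ≤ a + j) (h1 : a + j < n) :
    circleInner μ (fun z => z ^ (-a) * P.eval z) (· ^ j) = 0 := by
  rw [← hP (a + j) h0 h1]
  refine circleInner_congr μ fun w hw => ?_
  have hw0 : w ≠ 0 := ne_zero_of_norm_ne_zero (hw ▸ one_ne_zero)
  rw [map_mul, conj_zpow_of_norm_eq_one hw, neg_neg, zpow_add₀ hw0]
  ring

lemma circleInner_zpow_mul_dualPoly_zpow_eq_zero {P : ℂ[X]} {n : ℕ} (hdeg : P.natDegree ≤ n)
    (hP : ∀ j : ℤ, 0 ≤ j → j < n → circleInner μ P.eval (· ^ j) = 0) {a j : ℤ}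
    (h0 : 0 ≤ n - a - j) (h1 : n - a - j < n) :
    circleInner μ (fun z => z ^ (-a) * (dualPoly n P).eval z) (· ^ j) = 0 := by
  calc circleInner μ (fun z => z ^ (-a) * (dualPoly n P).eval z) (· ^ j)
      = circleInner μ (· ^ (n - a - j)) P.eval := by
        refine circleInner_congr μ fun w hw => ?_
        have hw0 : w ≠ 0 := ne_zero_of_norm_ne_zero (hw ▸ one_ne_zero)
        rw [dualPoly_eval_of_norm_eq_one hdeg hw, ← zpow_natCast, map_mul, map_mul,
          Complex.conj_conj, conj_zpow_of_norm_eq_one hw, conj_zpow_of_norm_eq_one hw,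
          conj_zpow_of_norm_eq_one hw, neg_neg, show -(n - a - j) = a + -n + j by ring,
          zpow_add₀ hw0, zpow_add₀ hw0]
        ring
    _ = 0 := by rw [← conj_circleInner, hP _ h0 h1, map_zero]

end CircleInner

noncomputable def laurentBasisPoly (p : ℕ → ℕ) (φ : ℕ → ℂ[X]) (n : ℕ) : ℂ[X] :=
  if p n = p (n - 1) then φ n else dualPoly n (φ n)

noncomputable def laurentBasis (p : ℕ → ℕ) (φ : ℕ → ℂ[X]) (n : ℕ) : ℂ → ℂ :=
  fun z => z ^ (-(p n : ℤ)) * (laurentBasisPoly p φ n).eval z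

section LaurentBasis

variable (μ : Measure ℝ) {p : ℕ → ℕ} {φ : ℕ → ℂ[X]}

lemma eq_pred_add_one_of_ne (hstep : ∀ n, p (n + 1) = p n ∨ p (n + 1) = p n + 1) {n : ℕ}
    (h : p n ≠ p (n - 1)) : p n = p (n - 1) + 1 := by
  cases n with
  | zero => exact absurd rfl h
  | succ k => exact (hstep k).resolve_left h

lemma monotone_of_step (hstep : ∀ n, p (n + 1) = p n ∨ p (n + 1) = p n + 1) : Monotone p :=
  monotone_nat_of_le_succ fun n => by rcases hstep n with h | h <;> omega

lemma monotone_sub_of_step (hstep : ∀ n, p (n + 1) = p n ∨ p (n + 1) = p n + 1) :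
    Monotone fun n : ℕ => (n : ℤ) - p n :=
  monotone_nat_of_le_succ fun n => by rcases hstep n with h | h <;> push_cast <;> omega

lemma continuousOn_laurentBasis (n : ℕ) : ContinuousOn (laurentBasis p φ n) (sphere 0 1) :=
  continuousOn_zpow_mul_eval _ _

lemma laurentBasisPoly_natDegree_le (hdeg : ∀ n, (φ n).natDegree ≤ n) (n : ℕ) :
    (laurentBasisPoly p φ n).natDegree ≤ n := by
  unfold laurentBasisPoly
  split_ifs
  exacts [hdeg n, dualPoly_natDegree_le n _]

lemma circleInner_laurentBasis_zpow_eq_zero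
    (hstep : ∀ n, p (n + 1) = p n ∨ p (n + 1) = p n + 1) (hdeg : ∀ n, (φ n).natDegree ≤ n)
    (hφ : ∀ (n : ℕ) (j : ℤ), 0 ≤ j → j < n → circleInner μ (φ n).eval (· ^ j) = 0)
    {n : ℕ} {j : ℤ} (h0 : -(p (n - 1) : ℤ) ≤ j) (h1 : j < n - p (n - 1)) :
    circleInner μ (laurentBasis p φ n) (· ^ j) = 0 := by
  by_cases h : p n = p (n - 1)
  · unfold laurentBasis laurentBasisPoly
    rw [if_pos h]
    exact circleInner_zpow_mul_eval_zpow_eq_zero μ (hφ n) (by omega) (by omega)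
  · have hsucc := eq_pred_add_one_of_ne hstep h
    unfold laurentBasis laurentBasisPoly
    rw [if_neg h]
    exact circleInner_zpow_mul_dualPoly_zpow_eq_zero μ (hdeg n) (hφ n) (by omega) (by omega)

lemma circleInner_laurentBasis_of_lt [IsFiniteMeasure μ]
    (hstep : ∀ n, p (n + 1) = p n ∨ p (n + 1) = p n + 1) (hdeg : ∀ n, (φ n).natDegree ≤ n)
    (hφ : ∀ (n : ℕ) (j : ℤ), 0 ≤ j → j < n → circleInner μ (φ n).eval (· ^ j) = 0)
    {m n : ℕ} (hmn : m < n) :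
    circleInner μ (laurentBasis p φ n) (laurentBasis p φ m) = 0 := by
  change circleInner μ _ (fun z => z ^ (-(p m : ℤ)) * (laurentBasisPoly p φ m).eval z) = 0
  rw [circleInner_zpow_mul_eval μ (continuousOn_laurentBasis n) _
    (laurentBasisPoly_natDegree_le hdeg m)]
  refine sum_eq_zero fun k hk => ?_
  have hkm := mem_range.1 hk
  have hmn' : m ≤ n - 1 := by omega
  have hp : p m ≤ p (n - 1) := monotone_of_step hstep hmn'
  have hsub : (m : ℤ) - p m ≤ (n - 1 : ℕ) - p (n - 1) := monotone_sub_of_step hstep hmn'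
  rw [circleInner_laurentBasis_zpow_eq_zero μ hstep hdeg hφ (by omega) (by omega), mul_zero]

lemma circleInner_laurentBasis_self (hdeg : ∀ n, (φ n).natDegree ≤ n) (n : ℕ) :
    circleInner μ (laurentBasis p φ n) (laurentBasis p φ n) =
      circleInner μ (φ n).eval (φ n).eval := by
  refine circleInner_congr μ fun w hw => ?_
  have hwn (a : ℤ) : ‖w ^ a‖ = 1 := by rw [norm_zpow, hw, one_zpow]
  unfold laurentBasis laurentBasisPoly
  rw [conj_mul_mul_mul_of_norm_eq_one (hwn _)]
  split_ifs
  · rfl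
  · rw [dualPoly_eval_of_norm_eq_one (hdeg n) hw, ← zpow_natCast,
      conj_mul_mul_mul_of_norm_eq_one (hwn _), Complex.conj_conj, mul_comm]

theorem circleInner_laurentBasis [IsFiniteMeasure μ]
    (hstep : ∀ n, p (n + 1) = p n ∨ p (n + 1) = p n + 1) (hdeg : ∀ n, (φ n).natDegree ≤ n)
    (hcoeff : ∀ n, (φ n).coeff n ≠ 0)
    (horth : ∀ n m, circleInner μ (φ n).eval (φ m).eval = if n = m then 1 else 0) (n m : ℕ) :
    circleInner μ (laurentBasis p φ n) (laurentBasis p φ m) = if n = m then 1 else 0 := by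
  have hφ (n : ℕ) (j : ℤ) (hj0 : 0 ≤ j) (hjn : j < n) :
      circleInner μ (φ n).eval (· ^ j) = 0 :=
    circleInner_eval_zpow_eq_zero μ hdeg hcoeff
      (fun n k hk => by rw [horth, if_neg hk.ne']) hj0 hjn
  rcases lt_trichotomy n m with h | rfl | h
  · rw [if_neg h.ne, ← conj_circleInner, circleInner_laurentBasis_of_lt μ hstep hdeg hφ h,
      map_zero]
  · rw [if_pos rfl, circleInner_laurentBasis_self μ hdeg, horth, if_pos rfl]
  · rw [if_neg h.ne', circleInner_laurentBasis_of_lt μ hstep hdeg hφ h]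

end LaurentBasis

theorem stmt7_general (μ : Measure ℝ) [IsProbabilityMeasure μ]
    (φ : ℕ → Polynomial ℂ)
    (hdeg : ∀ n, (φ n).natDegree = n)
    (horth : ∀ n m : ℕ,
      ∫ θ, starRingEnd ℂ ((φ n).eval (Complex.exp (θ * Complex.I))) *
        (φ m).eval (Complex.exp (θ * Complex.I)) ∂μ = if n = m then 1 else 0)
    (p : ℕ → ℕ)
    (hstep : ∀ n, p (n + 1) = p n ∨ p (n + 1) = p n + 1)
    (ψ : ℕ → ℂ → ℂ)
    (hψ0 : ∀ n z, p n = p (n - 1) →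
      ψ n z = z ^ (-(p n : ℤ)) * (φ n).eval z)
    (hψ1 : ∀ n z, n ≠ 0 → p n = p (n - 1) + 1 →
      ψ n z = z ^ (-(p n : ℤ)) * (dualPoly n (φ n)).eval z) :
    ∀ n m : ℕ,
      ∫ θ, starRingEnd ℂ (ψ n (Complex.exp (θ * Complex.I))) *
        ψ m (Complex.exp (θ * Complex.I)) ∂μ = if n = m then 1 else 0 := by
  have hcoeff (n : ℕ) : (φ n).coeff n ≠ 0 := by
    have hne : φ n ≠ 0 := fun h => by simpa [h] using horth n n
    simpa [leadingCoeff, hdeg n] using leadingCoeff_ne_zero.2 hne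
  have hψ : ψ = laurentBasis p φ := by
    funext n z
    unfold laurentBasis laurentBasisPoly
    split_ifs with h
    · exact hψ0 n z h
    · exact hψ1 n z (by rintro rfl; exact h rfl) (eq_pred_add_one_of_ne hstep h)
  subst hψ
  exact circleInner_laurentBasis μ hstep (fun n => (hdeg n).le) hcoeff horth

/-- let `μ` be a probability measure on the unit circle with orthonormal
Szegő polynomials `φ_n` (degree `n`, positive leading coefficient), `p` a generating
sequence with steps `s_n = p_n - p_{n-1}`, and define
`ψ_n(z) = z^{-p_n}·φ_n(z)` if `s_n = 0`, `ψ_n(z) = z^{-p_n}·φ*_n(z)` if `s_n = 1`.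
Then `(ψ_n)` is orthonormal with respect to the inner product induced by `μ`. -/
theorem stmt7 (μ : Measure ℝ) [IsProbabilityMeasure μ]
    (φ : ℕ → Polynomial ℂ)
    (hdeg : ∀ n, (φ n).natDegree = n)
    (hlc : ∀ n, ∃ r : ℝ, 0 < r ∧ (φ n).leadingCoeff = (r : ℂ))
    (horth : ∀ n m : ℕ,
      ∫ θ, starRingEnd ℂ ((φ n).eval (Complex.exp (θ * Complex.I))) *
        (φ m).eval (Complex.exp (θ * Complex.I)) ∂μ = if n = m then 1 else 0)
    (p : ℕ → ℕ) (hp0 : p 0 = 0) (hple : ∀ n, p n ≤ n)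
    (hstep : ∀ n, p (n + 1) = p n ∨ p (n + 1) = p n + 1)
    (ψ : ℕ → ℂ → ℂ)
    (hψ0 : ∀ n z, p n = p (n - 1) →
      ψ n z = z ^ (-(p n : ℤ)) * (φ n).eval z)
    (hψ1 : ∀ n z, n ≠ 0 → p n = p (n - 1) + 1 →
      ψ n z = z ^ (-(p n : ℤ)) * (dualPoly n (φ n)).eval z) :
    ∀ n m : ℕ,
      ∫ θ, starRingEnd ℂ (ψ n (Complex.exp (θ * Complex.I))) *
        ψ m (Complex.exp (θ * Complex.I)) ∂μ = if n = m then 1 else 0 :=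
  stmt7_general μ φ hdeg horth p hstep ψ hψ0 hψ1
end

section
/- Let H be an n×n unitary Hessenberg matrix (H i j = 0 for i ≥ j+2, H unitary) with all subdiagonal entries H(k+1,k) nonzero. Then there exist Givens transformations G₀, ..., G_{n−2}, each equal to the identity except for a 2×2 unitary block in rows and columns {k, k+1}, such that H = G₀·G₁·⋯·G_{n−2}. -/
/-!
The first column of a unitary Hessenberg matrix `H` is a unit vector `(a, b, 0, …, 0)`, so it is
also the first column of the Givens rotation `G₀` with block `!![a, -b̄; b, ā]`. Hence `G₀ᴴ H` has
first column `e₀`; being unitary, it also has first row `e₀`, i.e. `G₀ᴴ H = 1 ⊕ H'`. Since `G₀ᴴ`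
only mixes the first two rows, `H'` is again unitary Hessenberg, and induction on the size
factors `H'`; the factors of `H'` become Givens transformations one index further down.
-/

open Matrix

def IsGivens {n : ℕ} (k : ℕ) (G : Matrix (Fin n) (Fin n) ℂ) : Prop :=
  G ∈ Matrix.unitaryGroup (Fin n) ℂ ∧
    ∀ i j : Fin n, (i.val ≠ k ∧ i.val ≠ k + 1) ∨ (j.val ≠ k ∧ j.val ≠ k + 1) →
      G i j = if i = j then 1 else 0

def IsUpperHessenberg {R : Type*} [Zero R] {n : ℕ} (H : Matrix (Fin n) (Fin n) R) : Prop :=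
  ∀ i j : Fin n, j.val + 2 ≤ i.val → H i j = 0

section BlockDiagFin

variable {R : Type*} [CommRing R] {m k N : ℕ}

/-- `A ⊕ B`, indexed by `Fin N` for any `N = m + k`, so that both `2 + n` and `1 + (n + 1)` may be
read as `n + 2`. -/
def blockDiagFin (h : m + k = N) (A : Matrix (Fin m) (Fin m) R) (B : Matrix (Fin k) (Fin k) R) :
    Matrix (Fin N) (Fin N) R :=
  reindex (finSumFinEquiv.trans (finCongr h)) (finSumFinEquiv.trans (finCongr h))
    (fromBlocks A 0 0 B)

theorem finSumFinEquiv_trans_finCongr_symm_apply (h : m + k = N) (i : Fin N) :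
    (finSumFinEquiv.trans (finCongr h)).symm i =
      if hi : i.val < m then Sum.inl ⟨i, hi⟩ else Sum.inr ⟨i - m, by omega⟩ := by
  split_ifs with hi
  · rw [Equiv.symm_apply_eq]; ext; simp
  · rw [Equiv.symm_apply_eq]; ext; simp; omega

theorem blockDiagFin_apply (h : m + k = N) (A : Matrix (Fin m) (Fin m) R)
    (B : Matrix (Fin k) (Fin k) R) (i j : Fin N) :
    blockDiagFin h A B i j =
      if hi : i.val < m then (if hj : j.val < m then A ⟨i, hi⟩ ⟨j, hj⟩ else 0)
      else if hj : j.val < m then 0 else B ⟨i - m, by omega⟩ ⟨j - m, by omega⟩ := by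
  simp only [blockDiagFin, reindex_apply, submatrix_apply,
    finSumFinEquiv_trans_finCongr_symm_apply]
  split_ifs <;> rfl

theorem blockDiagFin_mul (h : m + k = N) (A A' : Matrix (Fin m) (Fin m) R)
    (B B' : Matrix (Fin k) (Fin k) R) :
    blockDiagFin h A B * blockDiagFin h A' B' = blockDiagFin h (A * A') (B * B') := by
  simp only [blockDiagFin, reindex_apply, submatrix_mul_equiv, fromBlocks_multiply]
  simp

theorem blockDiagFin_one (h : m + k = N) :
    blockDiagFin h (1 : Matrix (Fin m) (Fin m) R) 1 = 1 := by
  simp only [blockDiagFin, fromBlocks_one, reindex_apply, submatrix_one_equiv]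

theorem blockDiagFin_inj (h : m + k = N) {A A' : Matrix (Fin m) (Fin m) R}
    {B B' : Matrix (Fin k) (Fin k) R} :
    blockDiagFin h A B = blockDiagFin h A' B' ↔ A = A' ∧ B = B' := by
  simp only [blockDiagFin, EmbeddingLike.apply_eq_iff_eq, fromBlocks_inj, true_and]

theorem conjTranspose_blockDiagFin [StarRing R] (h : m + k = N) (A : Matrix (Fin m) (Fin m) R)
    (B : Matrix (Fin k) (Fin k) R) : (blockDiagFin h A B)ᴴ = blockDiagFin h Aᴴ Bᴴ := by
  simp [blockDiagFin, fromBlocks_conjTranspose]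

theorem blockDiagFin_mem_unitaryGroup_iff [StarRing R] (h : m + k = N)
    {A : Matrix (Fin m) (Fin m) R} {B : Matrix (Fin k) (Fin k) R} :
    blockDiagFin h A B ∈ unitaryGroup (Fin N) R ↔
      A ∈ unitaryGroup (Fin m) R ∧ B ∈ unitaryGroup (Fin k) R := by
  simp only [mem_unitaryGroup_iff', star_eq_conjTranspose, conjTranspose_blockDiagFin,
    blockDiagFin_mul, ← blockDiagFin_one h, blockDiagFin_inj]

theorem blockDiagFin_one_right_apply (h : m + k = N) (A : Matrix (Fin m) (Fin m) R)
    {i j : Fin N} (hij : m ≤ i.val ∨ m ≤ j.val) :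
    blockDiagFin h A 1 i j = (1 : Matrix (Fin N) (Fin N) R) i j := by
  simp only [blockDiagFin_apply, one_apply, Fin.ext_iff]
  split_ifs <;> first | rfl | omega

theorem blockDiagFin_one_right_mul_apply_of_le {n' : Type*} [Fintype n'] (h : m + k = N)
    (A : Matrix (Fin m) (Fin m) R) (M : Matrix (Fin N) n' R) {i : Fin N} (hi : m ≤ i.val)
    (j : n') : (blockDiagFin h A 1 * M) i j = M i j := by
  simp only [mul_apply, blockDiagFin_one_right_apply h A (.inl hi)]
  rw [← mul_apply, Matrix.one_mul]

theorem blockDiagFin_one_list_prod (h : m + k = N)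
    (L : List (Matrix (Fin k) (Fin k) R)) :
    (L.map (blockDiagFin h 1)).prod = blockDiagFin h 1 L.prod := by
  induction L with
  | nil => exact (blockDiagFin_one h).symm
  | cons A L ih =>
    rw [List.map_cons, List.prod_cons, ih, blockDiagFin_mul, Matrix.one_mul, List.prod_cons]

end BlockDiagFin

section Givens

variable {R : Type*} [CommRing R] [StarRing R]

def givensBlock (a b : R) : Matrix (Fin 2) (Fin 2) R := !![a, -star b; b, star a]

theorem givensBlock_mem_unitaryGroup {a b : R} (hab : star a * a + star b * b = 1) :
    givensBlock a b ∈ unitaryGroup (Fin 2) R := by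
  rw [mem_unitaryGroup_iff', star_eq_conjTranspose]
  ext i j
  fin_cases i <;> fin_cases j <;> simp [givensBlock, mul_apply, Fin.sum_univ_two] <;>
    first | linear_combination hab | ring

end Givens

theorem isGivens_zero_blockDiagFin {k N : ℕ} (h : 2 + k = N) {B : Matrix (Fin 2) (Fin 2) ℂ}
    (hB : B ∈ unitaryGroup (Fin 2) ℂ) : IsGivens 0 (blockDiagFin h B 1) := by
  refine ⟨(blockDiagFin_mem_unitaryGroup_iff h).2 ⟨hB, one_mem _⟩, fun i j hij => ?_⟩
  rw [blockDiagFin_one_right_apply h B (by omega), one_apply]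

theorem IsGivens.blockDiagFin_one_left {k m n N : ℕ} (h : m + n = N) {G : Matrix (Fin n) (Fin n) ℂ}
    (hG : IsGivens k G) : IsGivens (k + m) (blockDiagFin h 1 G) := by
  refine ⟨(blockDiagFin_mem_unitaryGroup_iff h).2 ⟨one_mem _, hG.1⟩, fun i j hij => ?_⟩
  have hne {x y : Fin N} (hx : x.val < m) (hy : m ≤ y.val) : x ≠ y := by rintro rfl; omega
  rw [blockDiagFin_apply]
  by_cases hi : i.val < m <;> by_cases hj : j.val < m
  · rw [dif_pos hi, dif_pos hj, one_apply]
    exact if_congr (by simp [Fin.ext_iff]) rfl rfl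
  · rw [dif_pos hi, dif_neg hj, if_neg (hne hi (by omega))]
  · rw [dif_neg hi, dif_pos hj, if_neg (hne hj (by omega)).symm]
  · rw [dif_neg hi, dif_neg hj, hG.2 _ _ (by simp only; omega)]
    exact if_congr (by simp [Fin.ext_iff]; omega) rfl rfl

section Deflation

variable {R : Type*} [CommRing R] [StarRing R] {n : ℕ}

theorem eq_blockDiagFin_one_of_mem_unitaryGroup {M : Matrix (Fin (n + 1)) (Fin (n + 1)) R}
    (hM : M ∈ unitaryGroup (Fin (n + 1)) R)
    (hcol : ∀ i, M i 0 = (1 : Matrix (Fin (n + 1)) (Fin (n + 1)) R) i 0) :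
    M = blockDiagFin (Nat.add_comm 1 n) 1 (M.submatrix Fin.succ Fin.succ) := by
  have hrow (j) : M 0 j = (1 : Matrix (Fin (n + 1)) (Fin (n + 1)) R) 0 j := by
    have := congr_fun₂ (mem_unitaryGroup_iff'.1 hM) 0 j
    simpa [mul_apply, Fin.sum_univ_succ, hcol, one_apply] using this
  ext i j
  rw [blockDiagFin_apply]
  cases i using Fin.cases <;> cases j using Fin.cases <;>
    simp [hrow, hcol, one_apply, eq_comm (a := (0 : Fin (n + 1)))]

def firstColumnGivens (H : Matrix (Fin (n + 2)) (Fin (n + 2)) R) :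
    Matrix (Fin (n + 2)) (Fin (n + 2)) R :=
  blockDiagFin (Nat.add_comm 2 n) (givensBlock (H 0 0) (H 1 0)) 1

theorem star_firstColumnGivens_mul_apply_of_le (H : Matrix (Fin (n + 2)) (Fin (n + 2)) R)
    {i : Fin (n + 2)} (hi : 2 ≤ i.val) (j : Fin (n + 2)) :
    (star (firstColumnGivens H) * H) i j = H i j := by
  rw [firstColumnGivens, star_eq_conjTranspose, conjTranspose_blockDiagFin, conjTranspose_one]
  exact blockDiagFin_one_right_mul_apply_of_le _ _ _ hi _

section FirstColumn

variable {H : Matrix (Fin (n + 2)) (Fin (n + 2)) R} (hU : H ∈ unitaryGroup (Fin (n + 2)) R)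
  (hH : ∀ i : Fin (n + 2), 2 ≤ i.val → H i 0 = 0)
include hH

omit hU in
theorem firstColumnGivens_apply_zero (i : Fin (n + 2)) : firstColumnGivens H i 0 = H i 0 := by
  rcases i with ⟨_ | _ | i, hi⟩
  · simp [firstColumnGivens, blockDiagFin_apply, givensBlock]
  · simp [firstColumnGivens, blockDiagFin_apply, givensBlock]
  · rw [firstColumnGivens, blockDiagFin_one_right_apply _ _ (.inl (by simp)), hH _ (by simp)]
    rfl

include hU

theorem givensBlock_firstColumn_mem_unitaryGroup :
    givensBlock (H 0 0) (H 1 0) ∈ unitaryGroup (Fin 2) R := by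
  refine givensBlock_mem_unitaryGroup ?_
  have := congr_fun₂ (mem_unitaryGroup_iff'.1 hU) 0 0
  rw [star_eq_conjTranspose, mul_apply, Fin.sum_univ_succ, Fin.sum_univ_succ,
    Finset.sum_eq_zero fun i _ => by simp [hH i.succ.succ (by simp)]] at this
  simpa using this

theorem firstColumnGivens_mem_unitaryGroup :
    firstColumnGivens H ∈ unitaryGroup (Fin (n + 2)) R :=
  (blockDiagFin_mem_unitaryGroup_iff _).2
    ⟨givensBlock_firstColumn_mem_unitaryGroup hU hH, one_mem _⟩

theorem star_firstColumnGivens_mul_apply_zero (i : Fin (n + 2)) :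
    (star (firstColumnGivens H) * H) i 0 = (1 : Matrix (Fin (n + 2)) (Fin (n + 2)) R) i 0 := by
  rw [← mem_unitaryGroup_iff'.1 (firstColumnGivens_mem_unitaryGroup hU hH), mul_apply, mul_apply]
  simp only [firstColumnGivens_apply_zero hH]

end FirstColumn

theorem exists_eq_firstColumnGivens_mul_blockDiagFin {H : Matrix (Fin (n + 2)) (Fin (n + 2)) R}
    (hU : H ∈ unitaryGroup (Fin (n + 2)) R) (hH : IsUpperHessenberg H) :
    ∃ H' : Matrix (Fin (n + 1)) (Fin (n + 1)) R, H' ∈ unitaryGroup (Fin (n + 1)) R ∧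
      IsUpperHessenberg H' ∧
        H = firstColumnGivens H * blockDiagFin (Nat.add_comm 1 (n + 1)) 1 H' := by
  have hcol (i : Fin (n + 2)) (hi : 2 ≤ i.val) : H i 0 = 0 := hH i 0 hi
  have hG := firstColumnGivens_mem_unitaryGroup hU hcol
  set M := star (firstColumnGivens H) * H with hM_def
  have hMU : M ∈ unitaryGroup (Fin (n + 2)) R := mul_mem (Unitary.star_mem hG) hU
  have hM := eq_blockDiagFin_one_of_mem_unitaryGroup hMU
    (star_firstColumnGivens_mul_apply_zero hU hcol)
  refine ⟨M.submatrix Fin.succ Fin.succ, ((blockDiagFin_mem_unitaryGroup_iff _).1 (hM ▸ hMU)).2,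
    fun i j hij => ?_, ?_⟩
  · rw [submatrix_apply, hM_def, star_firstColumnGivens_mul_apply_of_le H (by simp; omega)]
    exact hH _ _ (by simp; omega)
  · rw [← hM, hM_def, ← mul_assoc, mem_unitaryGroup_iff.1 hG, one_mul]

end Deflation

theorem exists_isGivens_prod_eq_of_isUpperHessenberg (n : ℕ)
    (H : Matrix (Fin (n + 2)) (Fin (n + 2)) ℂ) (hU : H ∈ unitaryGroup (Fin (n + 2)) ℂ)
    (hH : IsUpperHessenberg H) :
    ∃ G : Fin (n + 1) → Matrix (Fin (n + 2)) (Fin (n + 2)) ℂ,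
      (∀ k : Fin (n + 1), IsGivens k.val (G k)) ∧ H = (List.ofFn G).prod := by
  induction n with
  | zero => exact ⟨fun _ => H, fun _ => ⟨hU, fun i j hij => by omega⟩, by simp⟩
  | succ n ih =>
    obtain ⟨H', hH'U, hH'H, hH_eq⟩ := exists_eq_firstColumnGivens_mul_blockDiagFin hU hH
    obtain ⟨G', hG', rfl⟩ := ih H' hH'U hH'H
    refine ⟨Fin.cons (firstColumnGivens H) (blockDiagFin (Nat.add_comm 1 (n + 2)) 1 ∘ G'), ?_, ?_⟩
    · intro k
      cases k using Fin.cases with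
      | zero =>
        exact isGivens_zero_blockDiagFin _
          (givensBlock_firstColumn_mem_unitaryGroup hU fun i hi => hH i 0 hi)
      | succ k => exact (hG' k).blockDiagFin_one_left _
    · rwa [List.ofFn_cons, List.prod_cons, ← List.map_ofFn, blockDiagFin_one_list_prod]

theorem stmt12_general (n : ℕ) (hn : 2 ≤ n) (H : Matrix (Fin n) (Fin n) ℂ)
    (hU : Hᴴ * H = 1)
    (hHess : ∀ i j : Fin n, j.val + 2 ≤ i.val → H i j = 0) :
    ∃ G : Fin (n - 1) → Matrix (Fin n) (Fin n) ℂ,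
      (∀ k : Fin (n - 1), IsGivens k.val (G k)) ∧ H = (List.ofFn G).prod := by
  obtain ⟨m, rfl⟩ : ∃ m, n = m + 2 := ⟨n - 2, by omega⟩
  exact exists_isGivens_prod_eq_of_isUpperHessenberg m H (mem_unitaryGroup_iff'.2 hU) hHess

/-- every `n×n` unitary Hessenberg matrix `H` with nonzero subdiagonal
entries admits a factorization `H = G₀·G₁·⋯·G_{n-2}` into Givens transformations. -/
theorem stmt12 (n : ℕ) (hn : 2 ≤ n) (H : Matrix (Fin n) (Fin n) ℂ)
    (hU : Hᴴ * H = 1)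
    (hHess : ∀ i j : Fin n, j.val + 2 ≤ i.val → H i j = 0)
    (hsub : ∀ i j : Fin n, i.val = j.val + 1 → H i j ≠ 0) :
    ∃ G : Fin (n - 1) → Matrix (Fin n) (Fin n) ℂ,
      (∀ k : Fin (n - 1), IsGivens k.val (G k)) ∧ H = (List.ofFn G).prod :=
  stmt12_general n hn H hU hHess
end

section
/- Let A be an n×n unitary matrix that is upper Hessenberg (A i j = 0 for i ≥ j+2) with upper bandwidth m, i.e., A i j = 0 whenever j ≥ i + m + 1, where m + 1 < n. Then A is reducible in the sense that there exists k with 0 < k < n such that A maps span{e₀,...,e_{k−1}} to itself and span{e_k,...,e_{n−1}} to itself; equivalently A is a direct sum of two smaller blocks. -/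
/-!
If some subdiagonal entry `A (k, k-1)` vanishes, the Hessenberg shape makes `A` block upper
triangular with respect to `{0, …, k-1} ⊔ {k, …, n-1}`, and a block triangular unitary matrix is
block diagonal: the first `k` columns and the first `k` rows both carry total squared mass `k`.
If no subdiagonal entry vanishes, orthogonality of the last column to columns `0, 1, …, n-2`
successively kills its entries in rows `1, 2, …, n-1`, starting from `A (0, n-1) = 0`, which the
bandwidth gives; this contradicts the last column being a unit vector.
-/

open Matrix Finset

namespace Matrix

section Unitary

variable {𝕜 ι : Type*} [RCLike 𝕜] [Fintype ι] [DecidableEq ι] {A : Matrix ι ι 𝕜}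

theorem sum_norm_sq_col_eq_one_of_conjTranspose_mul_self (hA : Aᴴ * A = 1) (j : ι) :
    ∑ i, ‖A i j‖ ^ 2 = 1 := by
  have h := congr_fun₂ hA j j
  simp only [mul_apply, conjTranspose_apply, ← starRingEnd_apply, RCLike.conj_mul,
    one_apply_eq] at h
  exact_mod_cast h

theorem sum_norm_sq_row_eq_one_of_conjTranspose_mul_self (hA : Aᴴ * A = 1) (i : ι) :
    ∑ j, ‖A i j‖ ^ 2 = 1 := by
  have hA' : Aᴴᴴ * Aᴴ = 1 := by rw [conjTranspose_conjTranspose, mul_eq_one_comm.mp hA]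
  simpa using sum_norm_sq_col_eq_one_of_conjTranspose_mul_self hA' i

theorem apply_eq_zero_of_conjTranspose_mul_self_of_mapsTo (hA : Aᴴ * A = 1) (s : Finset ι)
    (hs : ∀ i j, j ∈ s → i ∉ s → A i j = 0) {i j : ι} (hi : i ∈ s) (hj : j ∉ s) :
    A i j = 0 := by
  have hcol : ∀ j ∈ s, ∑ i ∈ s, ‖A i j‖ ^ 2 = 1 := fun j hj => by
    have hout : ∑ i ∈ sᶜ, ‖A i j‖ ^ 2 = 0 :=
      sum_eq_zero fun i hi => by simp [hs i j hj (mem_compl.mp hi)]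
    rw [← sum_norm_sq_col_eq_one_of_conjTranspose_mul_self hA j, ← sum_add_sum_compl s, hout,
      add_zero]
  have hcols : ∑ j ∈ s, ∑ i ∈ s, ‖A i j‖ ^ 2 = #s := by simp [sum_congr rfl hcol]
  have hrows : ∑ i ∈ s, ∑ j, ‖A i j‖ ^ 2 = #s := by
    simp [sum_norm_sq_row_eq_one_of_conjTranspose_mul_self hA]
  have hout : ∑ i ∈ s, ∑ j ∈ sᶜ, ‖A i j‖ ^ 2 = 0 := by
    simp_rw [← sum_add_sum_compl s, sum_add_distrib] at hrows
    rw [sum_comm] at hcols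
    linarith
  have hnonneg : ∀ i ∈ s, 0 ≤ ∑ j ∈ sᶜ, ‖A i j‖ ^ 2 := fun _ _ => by positivity
  have := (sum_eq_zero_iff_of_nonneg hnonneg).mp hout i hi
  rw [sum_eq_zero_iff_of_nonneg (fun _ _ => by positivity)] at this
  simpa using this j (mem_compl.mpr hj)

end Unitary

section Hessenberg

variable {R : Type*} {n : ℕ} {A : Matrix (Fin n) (Fin n) R}

theorem apply_eq_zero_of_hessenberg_of_subdiag_eq_zero [Zero R]
    (hHess : ∀ i j : Fin n, j.val + 2 ≤ i.val → A i j = 0) {k l : Fin n}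
    (hkl : k.val = l.val + 1) (hz : A k l = 0) {i j : Fin n} (hj : j.val < k.val)
    (hi : k.val ≤ i.val) : A i j = 0 := by
  rcases Nat.lt_or_ge i.val (j.val + 2) with h | h
  · obtain rfl : i = k := Fin.ext (by omega)
    obtain rfl : j = l := Fin.ext (by omega)
    exact hz
  · exact hHess i j h

/-- Column `j` is supported on rows `≤ j + 1`, so for `j < c` its orthogonality to column `c`
forces `A (j + 1) c = 0` once the entries of column `c` above row `j + 1` vanish. -/
theorem apply_eq_zero_of_hessenberg_of_subdiag_ne_zero [Ring R] [StarRing R] [NoZeroDivisors R]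
    (hA : Aᴴ * A = 1) (hHess : ∀ i j : Fin n, j.val + 2 ≤ i.val → A i j = 0)
    (hsub : ∀ i j : Fin n, i.val = j.val + 1 → A i j ≠ 0) {c : Fin n}
    (htop : ∀ i : Fin n, i.val = 0 → A i c = 0) {i : Fin n} (hi : i.val ≤ c.val) :
    A i c = 0 := by
  induction h : i.val using Nat.strong_induction_on generalizing i with
  | _ N ih =>
  obtain _ | N := N
  · exact htop i h
  let j : Fin n := ⟨N, by omega⟩
  have horth : (Aᴴ * A) j c = 0 := by
    rw [hA, one_apply_ne (Fin.ne_of_val_ne (by simp [j]; omega))]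
  rw [mul_apply, sum_eq_single i] at horth
  · exact (mul_eq_zero.mp horth).resolve_left (by simpa using hsub i j (by simp [j, h]))
  · intro l _ hl
    have hli : l.val ≠ N + 1 := fun e => hl (Fin.ext (e.trans h.symm))
    rcases Nat.lt_or_ge l.val (N + 1) with hl' | hl'
    · rw [ih l.val hl' (by omega) rfl, mul_zero]
    · rw [conjTranspose_apply, hHess l j (by simp [j]; omega), star_zero, zero_mul]
  · simp

end Hessenberg

end Matrix

/-- a unitary `n×n` matrix `A` that is upper Hessenberg (`A i j = 0` for
`i ≥ j + 2`) with finite upper bandwidth `m` (`A i j = 0` for `j ≥ i + m + 1`), where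
`m + 1 < n`, is reducible: there is `k` with `0 < k < n` such that `A` is the direct sum
of a `k×k` block and an `(n-k)×(n-k)` block, i.e. `A i j = 0` whenever exactly one of
`i, j` is `< k`. -/
theorem stmt13 (n m : ℕ) (hm : m + 1 < n) (A : Matrix (Fin n) (Fin n) ℂ)
    (hU : Aᴴ * A = 1)
    (hHess : ∀ i j : Fin n, j.val + 2 ≤ i.val → A i j = 0)
    (hband : ∀ i j : Fin n, i.val + m + 1 ≤ j.val → A i j = 0) :
    ∃ k : ℕ, 0 < k ∧ k < n ∧
      ∀ i j : Fin n, ((i.val < k ∧ k ≤ j.val) ∨ (j.val < k ∧ k ≤ i.val)) → A i j = 0 := by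
  by_cases hsub : ∀ i j : Fin n, i.val = j.val + 1 → A i j ≠ 0
  · let c : Fin n := ⟨n - 1, by omega⟩
    have hcol (i : Fin n) : A i c = 0 :=
      apply_eq_zero_of_hessenberg_of_subdiag_ne_zero hU hHess hsub
        (fun i hi => hband i c (by simp [c]; omega)) (by simp [c]; omega)
    simpa [hcol] using sum_norm_sq_col_eq_one_of_conjTranspose_mul_self hU c
  push Not at hsub
  obtain ⟨k, l, hkl, hz⟩ := hsub
  have hlower {i j : Fin n} : j.val < k.val → k.val ≤ i.val → A i j = 0 :=
    apply_eq_zero_of_hessenberg_of_subdiag_eq_zero hHess hkl hz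
  refine ⟨k.val, by omega, k.isLt, ?_⟩
  rintro i j (⟨hi, hj⟩ | ⟨hj, hi⟩)
  · exact apply_eq_zero_of_conjTranspose_mul_self_of_mapsTo hU (Iio k)
      (fun i j hj hi => hlower (mem_Iio.mp hj : j < k) (not_lt.mp (mem_Iio.not.mp hi : ¬i < k)))
      (mem_Iio.mpr hi) (mem_Iio.not.mpr (not_lt.mpr hj))
  · exact hlower hj hi
end

section
/- Let α₀,...,α_{n−1} be complex numbers with |α_k| < 1, ρ_k = √(1 − |α_k|²), and let G_k be the n×n Givens transformation equal to the identity except for the block [[conj(α_k), ρ_k],[ρ_k, −α_k]] in rows and columns {k, k+1} (for 0 ≤ k ≤ n−2). Then the product C = (G_{n−2}⋯G_4 G_2 G_0)·(G_1 G_3 G_5 ⋯) (even-indexed factors multiplied together on the left, odd-indexed factors on the right; even-indexed factors commute among themselves and odd-indexed factors commute among themselves) is five-diagonal: C i j = 0 whenever |i − j| > 2. -/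
/-!
The even-indexed Givens factors act on the disjoint pairs `{2m, 2m+1}`, so their product is
block diagonal for the partition `i ↦ i / 2`; the odd-indexed ones act on `{2m+1, 2m+2}`, so
their product is block diagonal for `i ↦ (i + 1) / 2`. Hence `C i j` can only be nonzero if some
`l` shares a block with `i` in the first partition and with `j` in the second, which forces
`|i - j| ≤ 2`.
-/

open Matrix

/-- The `n×n` Givens transformation with Schur-parameter block
`[[conj α_k, ρ_k],[ρ_k, -α_k]]` in rows and columns `{k, k+1}`. -/
noncomputable def givensMat (n : ℕ) (α : ℕ → ℂ) (ρ : ℕ → ℝ) (k : ℕ) :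
    Matrix (Fin n) (Fin n) ℂ := fun i j =>
  if i.val = k ∧ j.val = k then starRingEnd ℂ (α k)
  else if i.val = k ∧ j.val = k + 1 then ((ρ k : ℝ) : ℂ)
  else if i.val = k + 1 ∧ j.val = k then ((ρ k : ℝ) : ℂ)
  else if i.val = k + 1 ∧ j.val = k + 1 then -α k
  else if i = j then 1 else 0

namespace Matrix

variable {ι β R : Type*}

def IsBlockDiagonalBy [Zero R] (f : ι → β) (A : Matrix ι ι R) : Prop :=
  ∀ i j, f i ≠ f j → A i j = 0

section

variable [Fintype ι] [NonUnitalNonAssocSemiring R] {f g : ι → β} {A B : Matrix ι ι R}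

theorem IsBlockDiagonalBy.mul_apply_eq_zero (hA : IsBlockDiagonalBy f A)
    (hB : IsBlockDiagonalBy g B) {i j : ι} (h : ∀ l, f i = f l → g l ≠ g j) :
    (A * B) i j = 0 := by
  rw [mul_apply]
  refine Finset.sum_eq_zero fun l _ => ?_
  by_cases hil : f i = f l
  · rw [hB l j (h l hil), mul_zero]
  · rw [hA i l hil, zero_mul]

theorem IsBlockDiagonalBy.mul (hA : IsBlockDiagonalBy f A) (hB : IsBlockDiagonalBy f B) :
    IsBlockDiagonalBy f (A * B) :=
  fun _ _ hij => hA.mul_apply_eq_zero hB fun _ hil => hil ▸ hij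

end

theorem isBlockDiagonalBy_one [DecidableEq ι] [Zero R] [One R] (f : ι → β) :
    IsBlockDiagonalBy f (1 : Matrix ι ι R) :=
  fun _ _ hij => one_apply_ne fun h => hij (congrArg f h)

theorem isBlockDiagonalBy_list_prod [Fintype ι] [DecidableEq ι] [Semiring R] (f : ι → β)
    (l : List (Matrix ι ι R)) (hl : ∀ A ∈ l, IsBlockDiagonalBy f A) :
    IsBlockDiagonalBy f l.prod := by
  induction l with
  | nil => exact isBlockDiagonalBy_one f
  | cons A l ih =>
    rw [List.prod_cons]
    exact (hl A List.mem_cons_self).mul (ih fun B hB => hl B (List.mem_cons_of_mem A hB))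

end Matrix

variable {β : Type*} {n : ℕ} {α : ℕ → ℂ} {ρ : ℕ → ℝ}

theorem givensMat_isBlockDiagonalBy (g : ℕ → β) {k : ℕ} (hk : g k = g (k + 1)) :
    IsBlockDiagonalBy (fun i : Fin n => g i) (givensMat n α ρ k) := by
  intro i j hij
  simp only at hij
  unfold givensMat
  split_ifs with h₁ h₂ h₃ h₄ h₅
  · exact absurd (by rw [h₁.1, h₁.2]) hij
  · exact absurd (by rw [h₂.1, h₂.2, hk]) hij
  · exact absurd (by rw [h₃.1, h₃.2, hk]) hij
  · exact absurd (by rw [h₄.1, h₄.2]) hij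
  · exact absurd (by rw [h₅]) hij
  · rfl

theorem isBlockDiagonalBy_prod_givensMat (g : ℕ → β) (ks : List ℕ)
    (hks : ∀ k ∈ ks, g k = g (k + 1)) :
    IsBlockDiagonalBy (fun i : Fin n => g i) (ks.map (givensMat n α ρ)).prod := by
  refine isBlockDiagonalBy_list_prod _ _ fun A hA => ?_
  obtain ⟨k, hk, rfl⟩ := List.mem_map.1 hA
  exact givensMat_isBlockDiagonalBy g (hks k hk)

theorem stmt14_general (n : ℕ) (α : ℕ → ℂ) (ρ : ℕ → ℝ)
    (C : Matrix (Fin n) (Fin n) ℂ)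
    (hC : C = (((List.range (n - 1)).filter (fun k => k % 2 = 0)).map
        (givensMat n α ρ)).prod *
      (((List.range (n - 1)).filter (fun k => k % 2 = 1)).map (givensMat n α ρ)).prod) :
    ∀ i j : Fin n, 2 < ((i.val : ℤ) - (j.val : ℤ)).natAbs → C i j = 0 := by
  intro i j hij
  subst hC
  refine (isBlockDiagonalBy_prod_givensMat (· / 2) _ ?even).mul_apply_eq_zero
    (isBlockDiagonalBy_prod_givensMat (fun m => (m + 1) / 2) _ ?odd) fun l h₁ h₂ => by omega
  all_goals
    intro k hk
    simp only [List.mem_filter, decide_eq_true_eq] at hk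
    omega

/-- the CMV product `C = (∏ even-indexed G_k) · (∏ odd-indexed G_k)` of the
Schur-parameter Givens transformations is five-diagonal: `C i j = 0` for `|i - j| > 2`. -/
theorem stmt14 (n : ℕ) (α : ℕ → ℂ) (ρ : ℕ → ℝ)
    (hα : ∀ k, ‖α k‖ < 1)
    (hρ : ∀ k, ρ k = Real.sqrt (1 - ‖α k‖ ^ 2))
    (C : Matrix (Fin n) (Fin n) ℂ)
    (hC : C = (((List.range (n - 1)).filter (fun k => k % 2 = 0)).map
        (givensMat n α ρ)).prod *
      (((List.range (n - 1)).filter (fun k => k % 2 = 1)).map (givensMat n α ρ)).prod) :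
    ∀ i j : Fin n, 2 < ((i.val : ℤ) - (j.val : ℤ)).natAbs → C i j = 0 :=
  stmt14_general n α ρ C hC
end

section
/- Let S = ∏ G_{k,k+1} be a snake-shaped product of n×n Givens transformations (each G_k equal to identity except for a 2×2 unitary block on rows/columns {k,k+1}, multiplied in some order determined by a sign sequence s ∈ {0,1}^{n−1}). If there exists an index l with i ≤ l ≤ j such that in the product order G_{l} appears to the left of G_{l−1} (i.e., s_l = 1) with i + 1 ≤ l ≤ j − 1, then the (i,j) entry of S, for i < j, can be computed from the factored form: S(i,j) equals the (i,j) entry of the product of only the factors G_{i−1},...,G_{j}; in particular if the factors split as (∏_{k=l}^{j} G_k)·(∏_{k=i−1}^{l−1} G_k) with i+1 ≤ l ≤ j−1, then S(i,j) = 0. -/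
open Matrix

/-- The snake-shaped partial product of the Givens transformations `G_a, ..., G_{a+m}`:
starting from `G_a`, the factor `G_k` is multiplied on the left if `s k = true`
(`s_k = 1`) and on the right if `s k = false` (`s_k = 0`). -/
noncomputable def snakePartial {n : ℕ} (G : ℕ → Matrix (Fin n) (Fin n) ℂ) (s : ℕ → Bool) (a : ℕ) :
    ℕ → Matrix (Fin n) (Fin n) ℂ
  | 0 => G a
  | m + 1 =>
      if s (a + m + 1) then G (a + m + 1) * snakePartial G s a m
      else snakePartial G s a m * G (a + m + 1)

namespace Stmt16Aux

variable {n : ℕ}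

/-- `M` is the identity outside the square block with indices in `[a, b]`. -/
def Supp (a b : ℕ) (M : Matrix (Fin n) (Fin n) ℂ) : Prop :=
  ∀ r c : Fin n, (r.val < a ∨ b < r.val ∨ c.val < a ∨ b < c.val) →
    M r c = if r = c then 1 else 0

lemma Supp.mono {a b a' b' : ℕ} {M : Matrix (Fin n) (Fin n) ℂ} (h : Supp a b M)
    (ha : a' ≤ a) (hb : b ≤ b') : Supp a' b' M := fun r c hrc => h r c (by omega)

lemma Supp.mul {a b : ℕ} {M N : Matrix (Fin n) (Fin n) ℂ}
    (hM : Supp a b M) (hN : Supp a b N) : Supp a b (M * N) := by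
  intro r c hrc
  rw [Matrix.mul_apply]
  by_cases hr : r.val < a ∨ b < r.val
  · have hrow : ∀ k : Fin n, M r k = if r = k then 1 else 0 := fun k => hM r k (by tauto)
    have : ∀ k : Fin n, M r k * N k c = (if r = k then N k c else 0) := by
      intro k; rw [hrow k]; split <;> simp
    rw [Finset.sum_congr rfl (fun k _ => this k), Finset.sum_ite_eq, if_pos (Finset.mem_univ r)]
    exact hN r c (by tauto)
  · have hc : c.val < a ∨ b < c.val := by tauto
    have hcol : ∀ k : Fin n, N k c = if k = c then 1 else 0 := fun k => hN k c (by tauto)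
    have : ∀ k : Fin n, M r k * N k c = (if k = c then M r k else 0) := by
      intro k; rw [hcol k]; split <;> simp
    rw [Finset.sum_congr rfl (fun k _ => this k), Finset.sum_ite_eq', if_pos (Finset.mem_univ c)]
    exact hM r c (by tauto)

lemma mul_left_entry {a b : ℕ} {U M : Matrix (Fin n) (Fin n) ℂ} (hU : Supp a b U)
    (i j : Fin n) (hi : i.val < a ∨ b < i.val) : (U * M) i j = M i j := by
  rw [Matrix.mul_apply]
  have hrow : ∀ k : Fin n, U i k = if i = k then 1 else 0 := fun k => hU i k (by tauto)
  have : ∀ k : Fin n, U i k * M k j = (if i = k then M k j else 0) := by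
    intro k; rw [hrow k]; split <;> simp
  rw [Finset.sum_congr rfl (fun k _ => this k), Finset.sum_ite_eq, if_pos (Finset.mem_univ i)]

lemma mul_right_entry {a b : ℕ} {P M : Matrix (Fin n) (Fin n) ℂ} (hP : Supp a b P)
    (i j : Fin n) (hj : j.val < a ∨ b < j.val) : (M * P) i j = M i j := by
  rw [Matrix.mul_apply]
  have hcol : ∀ k : Fin n, P k j = if k = j then 1 else 0 := fun k => hP k j (by tauto)
  have : ∀ k : Fin n, M i k * P k j = (if k = j then M i k else 0) := by
    intro k; rw [hcol k]; split <;> simp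
  rw [Finset.sum_congr rfl (fun k _ => this k), Finset.sum_ite_eq', if_pos (Finset.mem_univ j)]

lemma supp_commute {a b a' b' : ℕ} {M N : Matrix (Fin n) (Fin n) ℂ}
    (hM : Supp a b M) (hN : Supp a' b' N) (hab : b < a') : M * N = N * M := by
  have h1 : (M - 1) * (N - 1) = 0 := by
    ext r c
    rw [Matrix.mul_apply]
    refine Finset.sum_eq_zero fun k _ => ?_
    by_cases hk : k.val ≤ b
    · have : N k c = if k = c then 1 else 0 := hN k c (by omega)
      simp [Matrix.sub_apply, this, Matrix.one_apply]
    · have : M r k = if r = k then 1 else 0 := hM r k (by omega)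
      simp [Matrix.sub_apply, this, Matrix.one_apply]
  have h2 : (N - 1) * (M - 1) = 0 := by
    ext r c
    rw [Matrix.mul_apply]
    refine Finset.sum_eq_zero fun k _ => ?_
    by_cases hk : k.val ≤ b
    · have : N r k = if r = k then 1 else 0 := hN r k (by omega)
      simp [Matrix.sub_apply, this, Matrix.one_apply]
    · have : M k c = if k = c then 1 else 0 := hM k c (by omega)
      simp [Matrix.sub_apply, this, Matrix.one_apply]
  have e1 : M * N = 1 + (M - 1) + (N - 1) + (M - 1) * (N - 1) := by noncomm_ring
  have e2 : N * M = 1 + (M - 1) + (N - 1) + (N - 1) * (M - 1) := by noncomm_ring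
  rw [e1, e2, h1, h2]

lemma givens_supp {k : ℕ} {M : Matrix (Fin n) (Fin n) ℂ} (h : IsGivens k M) :
    Supp k (k + 1) M := by
  intro r c hrc
  exact h.2 r c (by omega)

lemma snake_supp (G : ℕ → Matrix (Fin n) (Fin n) ℂ) (s : ℕ → Bool) (a : ℕ) :
    ∀ m, (∀ k, a ≤ k → k ≤ a + m → IsGivens k (G k)) →
      Supp a (a + m + 1) (snakePartial G s a m)
  | 0, h => (givens_supp (h a le_rfl (by omega))).mono le_rfl (by omega)
  | m + 1, h => by
    have ih := snake_supp G s a m (fun k hk1 hk2 => h k hk1 (by omega))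
    have hg : Supp (a + m + 1) (a + m + 2) (G (a + m + 1)) :=
      givens_supp (h (a + m + 1) (by omega) (by omega))
    show Supp a (a + (m + 1) + 1)
      (if s (a + m + 1) then G (a + m + 1) * snakePartial G s a m
        else snakePartial G s a m * G (a + m + 1))
    split
    · exact Supp.mul (hg.mono (by omega) (by omega)) (ih.mono le_rfl (by omega))
    · exact Supp.mul (ih.mono le_rfl (by omega)) (hg.mono (by omega) (by omega))


/-- Adding factors with index beyond `j` does not change the `(i,j)` entry. -/
lemma snake_entry_stable (G : ℕ → Matrix (Fin n) (Fin n) ℂ) (s : ℕ → Bool) (a : ℕ)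
    (i j : Fin n) (hij : i.val < j.val) :
    ∀ m' m, m ≤ m' → j.val ≤ a + m → (∀ k, a ≤ k → k ≤ a + m' → IsGivens k (G k)) →
      snakePartial G s a m' i j = snakePartial G s a m i j := by
  intro m'
  induction m' with
  | zero =>
    intro m hm _ _
    have : m = 0 := by omega
    rw [this]
  | succ m' ih =>
    intro m hm hj hGk
    rcases Nat.eq_or_lt_of_le hm with h | h
    · rw [h]
    · have ih' := ih m (by omega) hj (fun k hk1 hk2 => hGk k hk1 (by omega))
      have hg : Supp (a + m' + 1) (a + m' + 2) (G (a + m' + 1)) :=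
        givens_supp (hGk _ (by omega) (by omega))
      show (if s (a + m' + 1) then G (a + m' + 1) * snakePartial G s a m'
          else snakePartial G s a m' * G (a + m' + 1)) i j = _
      split
      · rw [mul_left_entry hg _ _ (Or.inl (by omega)), ih']
      · rw [mul_right_entry hg _ _ (Or.inl (by omega)), ih']

/-- Stripping the bottom of the snake: the inner part `G_0 ⋯ G_{i-2}` factors out
to the left or right of the sub-snake starting at `G_{i-1}`. -/
lemma snake_strip (G : ℕ → Matrix (Fin n) (Fin n) ℂ) (s : ℕ → Bool) (i : ℕ) (hi2 : 2 ≤ i) :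
    ∀ m, (∀ k, k ≤ i - 1 + m → IsGivens k (G k)) →
      snakePartial G s 0 (i - 1 + m) =
        if s (i - 1) then snakePartial G s (i - 1) m * snakePartial G s 0 (i - 2)
        else snakePartial G s 0 (i - 2) * snakePartial G s (i - 1) m := by
  intro m
  induction m with
  | zero =>
    intro hGk
    have h1 : i - 1 + 0 = (i - 2) + 1 := by omega
    rw [h1]
    show (if s (0 + (i - 2) + 1) then G (0 + (i - 2) + 1) * snakePartial G s 0 (i - 2)
        else snakePartial G s 0 (i - 2) * G (0 + (i - 2) + 1)) = _
    have h2 : 0 + (i - 2) + 1 = i - 1 := by omega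
    rw [h2]
    rfl
  | succ m ih =>
    intro hGk
    have ih' := ih (fun k hk => hGk k (by omega))
    have hP : Supp 0 (i - 1) (snakePartial G s 0 (i - 2)) :=
      (snake_supp G s 0 (i - 2) (fun k _ hk2 => hGk k (by omega))).mono le_rfl (by omega)
    have hg : Supp (i + m) (i + m + 1) (G (i + m)) :=
      givens_supp (hGk (i + m) (by omega))
    have hcomm : snakePartial G s 0 (i - 2) * G (i + m) = G (i + m) * snakePartial G s 0 (i - 2) :=
      supp_commute hP hg (by omega)
    have e1 : i - 1 + (m + 1) = (i - 1 + m) + 1 := by omega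
    rw [e1]
    show (if s (0 + (i - 1 + m) + 1) then G (0 + (i - 1 + m) + 1) * snakePartial G s 0 (i - 1 + m)
        else snakePartial G s 0 (i - 1 + m) * G (0 + (i - 1 + m) + 1)) = _
    have e2 : 0 + (i - 1 + m) + 1 = i + m := by omega
    rw [e2, ih']
    have e3 : (i - 1) + m + 1 = i + m := by omega
    show _ = if s (i - 1) then
        (if s ((i - 1) + m + 1) then G ((i - 1) + m + 1) * snakePartial G s (i - 1) m
          else snakePartial G s (i - 1) m * G ((i - 1) + m + 1)) * snakePartial G s 0 (i - 2)
      else snakePartial G s 0 (i - 2) *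
        (if s ((i - 1) + m + 1) then G ((i - 1) + m + 1) * snakePartial G s (i - 1) m
          else snakePartial G s (i - 1) m * G ((i - 1) + m + 1))
    rw [e3]
    by_cases h1 : s (i - 1) <;> by_cases h2 : s (i + m) <;>
      simp only [h1, h2, Bool.false_eq_true, if_true, if_false]
    · rw [mul_assoc]
    · rw [mul_assoc, hcomm, ← mul_assoc]
    · rw [← mul_assoc, ← hcomm, mul_assoc, ← mul_assoc]
    · rw [mul_assoc]

/-- If `s l = true` with `a + 1 ≤ l`, the snake splits as an upper part times the
lower part `G_a ⋯ G_{l-1}`. -/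
lemma snake_split (G : ℕ → Matrix (Fin n) (Fin n) ℂ) (s : ℕ → Bool) (a l : ℕ)
    (hsl : s l = true) (hl : a + 1 ≤ l) :
    ∀ m, l - a ≤ m → (∀ k, a ≤ k → k ≤ a + m → IsGivens k (G k)) →
      ∃ U : Matrix (Fin n) (Fin n) ℂ, Supp l (a + m + 1) U ∧
        snakePartial G s a m = U * snakePartial G s a (l - 1 - a) := by
  intro m
  induction m with
  | zero => intro h; omega
  | succ m ih =>
    intro hm hGk
    have hT : Supp a l (snakePartial G s a (l - 1 - a)) :=
      (snake_supp G s a (l - 1 - a) (fun k hk1 hk2 => hGk k hk1 (by omega))).mono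
        le_rfl (by omega)
    by_cases hm' : l - a ≤ m
    · obtain ⟨U, hU, hEq⟩ := ih hm' (fun k h1 h2 => hGk k h1 (by omega))
      have hg : Supp (a + m + 1) (a + m + 2) (G (a + m + 1)) :=
        givens_supp (hGk (a + m + 1) (by omega) (by omega))
      have hcomm : snakePartial G s a (l - 1 - a) * G (a + m + 1)
          = G (a + m + 1) * snakePartial G s a (l - 1 - a) :=
        supp_commute hT hg (by omega)
      show ∃ U', Supp l (a + (m + 1) + 1) U' ∧
        (if s (a + m + 1) then G (a + m + 1) * snakePartial G s a m
          else snakePartial G s a m * G (a + m + 1)) = U' * _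
      by_cases hs : s (a + m + 1) <;> simp only [hs, Bool.false_eq_true, if_true, if_false]
      · exact ⟨G (a + m + 1) * U,
          Supp.mul (hg.mono (by omega) (by omega)) (hU.mono le_rfl (by omega)),
          by rw [hEq, mul_assoc]⟩
      · exact ⟨U * G (a + m + 1),
          Supp.mul (hU.mono le_rfl (by omega)) (hg.mono (by omega) (by omega)),
          by rw [hEq, mul_assoc, hcomm, ← mul_assoc]⟩
    · have hml : a + m + 1 = l := by omega
      have hmval : m = l - 1 - a := by omega
      refine ⟨G l, (givens_supp (hGk l (by omega) (by omega))).mono le_rfl (by omega), ?_⟩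
      show (if s (a + m + 1) then G (a + m + 1) * snakePartial G s a m
          else snakePartial G s a m * G (a + m + 1)) = _
      rw [hml, hsl, if_pos rfl, hmval]

end Stmt16Aux

open Stmt16Aux

/-- let `S = ∏ G_k` be the snake-shaped product of the `n×n` Givens
transformations `G_0, ..., G_{n-2}` in the order determined by the sign sequence `s`.
For `1 ≤ i < j ≤ n-2`, the `(i,j)` entry of `S` equals the `(i,j)` entry of the
sub-snake formed by the factors `G_{i-1}, ..., G_j` only; and if moreover there is an
index `l` with `i + 1 ≤ l ≤ j - 1` and `s l = 1` (so that the product splits as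
`(∏_{k=l}^{j} G_k)·(∏_{k=i-1}^{l-1} G_k)`), then `S(i,j) = 0`. -/
theorem stmt16 (n : ℕ) (hn : 2 ≤ n) (G : ℕ → Matrix (Fin n) (Fin n) ℂ) (s : ℕ → Bool)
    (hG : ∀ k, k + 1 < n → IsGivens k (G k))
    (i j l : ℕ) (hi : 1 ≤ i) (hij : i < j) (hj : j ≤ n - 2) :
    snakePartial G s 0 (n - 2) ⟨i, by omega⟩ ⟨j, by omega⟩ =
      snakePartial G s (i - 1) (j - i + 1) ⟨i, by omega⟩ ⟨j, by omega⟩ ∧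
    ((i + 1 ≤ l ∧ l ≤ j - 1 ∧ s l = true) →
      snakePartial G s 0 (n - 2) ⟨i, by omega⟩ ⟨j, by omega⟩ = 0) := by
  have hpeel : snakePartial G s 0 (n - 2) ⟨i, by omega⟩ ⟨j, by omega⟩ =
      snakePartial G s 0 j ⟨i, by omega⟩ ⟨j, by omega⟩ :=
    snake_entry_stable G s 0 ⟨i, by omega⟩ ⟨j, by omega⟩ hij (n - 2) j hj (show j ≤ 0 + j by omega)
      (fun k _ hk2 => hG k (by omega))
  have hmain : snakePartial G s 0 j ⟨i, by omega⟩ ⟨j, by omega⟩ =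
      snakePartial G s (i - 1) (j - i + 1) ⟨i, by omega⟩ ⟨j, by omega⟩ := by
    rcases Nat.lt_or_ge i 2 with h2 | h2
    · have hi1 : i = 1 := by omega
      subst hi1
      have e : j - 1 + 1 = j := by omega
      simp only [Nat.sub_self, e]
    · have hs := snake_strip G s i h2 (j - i + 1) (fun k hk => hG k (by omega))
      have hj' : i - 1 + (j - i + 1) = j := by omega
      rw [hj'] at hs
      rw [hs]
      have hP : Supp 0 (i - 1) (snakePartial G s 0 (i - 2)) :=
        (snake_supp G s 0 (i - 2) (fun k _ hk2 => hG k (by omega))).mono le_rfl (by omega)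
      by_cases h1 : s (i - 1) <;> simp only [h1, Bool.false_eq_true, if_true, if_false]
      · exact mul_right_entry hP _ _ (Or.inr (show i - 1 < j by omega))
      · exact mul_left_entry hP _ _ (Or.inr (show i - 1 < i by omega))
  refine ⟨hpeel.trans hmain, ?_⟩
  rintro ⟨hl1, hl2, hsl⟩
  rw [hpeel, hmain]
  obtain ⟨U, hU, hEq⟩ := snake_split G s (i - 1) l hsl (by omega) (j - i + 1) (by omega)
    (fun k hk1 hk2 => hG k (by omega))
  rw [hEq, mul_left_entry hU _ _ (Or.inl (show i < l by omega))]
  have hT : Supp (i - 1) l (snakePartial G s (i - 1) (l - 1 - (i - 1))) :=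
    (snake_supp G s (i - 1) (l - 1 - (i - 1)) (fun k hk1 hk2 => hG k (by omega))).mono
      le_rfl (by omega)
  rw [hT _ _ (Or.inr (Or.inr (Or.inr (show l < j by omega)))),
    if_neg (by simp only [ne_eq, Fin.mk.injEq]; omega)]
end
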